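/- arXiv:0801.2378 — 14 statements merged into one kernel-verified Lean document; each statement's English description precedes it below -/
import Mathlib

section
/- Let α be a linearly ordered type, let P and Q be lists over α, and let # be an element of α such that c < # for every character c occurring in Q. Then P is a prefix of Q if and only if P ≤_lex Q and Q <_lex P ++ [#]. -/
/-!
Write `Q = P ++ R`. Then `P ≤ Q` because a prefix is never larger, and `Q < P ++ [#]` because
the lists agree on `P` and the first letter of `R`, if any, is below `#`. Conversely, the two
inequalities force `Q` to follow `P` letter by letter: at a first disagreement the letter of `Q`
would be both larger and smaller than that of `P`, and if `Q` ended first it would be below `P`.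
-/

namespace List

variable {α : Type*} {r : α → α → Prop}

theorem IsPrefix.lex_or_eq {P Q : List α} (h : P <+: Q) : Lex r P Q ∨ P = Q := by
  obtain ⟨R, rfl⟩ := h
  cases R with
  | nil => exact Or.inr (append_nil P).symm
  | cons c R => exact Or.inl (by simpa using Lex.append_left r (Lex.nil (a := c) (l := R)) P)

theorem lex_append_append_singleton (P : List α) {R : List α} {b : α}
    (h : ∀ c ∈ R, r c b) : Lex r (P ++ R) (P ++ [b]) := by
  refine Lex.append_left r ?_ P
  cases R with
  | nil => exact Lex.nil
  | cons c R => exact Lex.rel (h c mem_cons_self)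

theorem isPrefix_of_lex_of_lex_append_singleton [Std.Asymm r] {P Q : List α} {b : α}
    (hPQ : Lex r P Q ∨ P = Q) (hQP : Lex r Q (P ++ [b])) : P <+: Q := by
  induction P generalizing Q with
  | nil => exact nil_prefix
  | cons p P ih =>
    cases Q with
    | nil => simp at hPQ
    | cons q Q =>
      rw [cons_lex_cons_iff, cons_eq_cons, or_assoc] at hPQ
      rw [cons_append, cons_lex_cons_iff] at hQP
      rcases hPQ with hpq | ⟨rfl, hPQ⟩ | ⟨rfl, rfl⟩
      · rcases hQP with hqp | ⟨rfl, -⟩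
        · exact absurd hqp (Std.Asymm.asymm _ _ hpq)
        · exact absurd hpq (Std.Irrefl.irrefl _)
      · rcases hQP with hpp | ⟨-, hQP⟩
        · exact absurd hpp (Std.Irrefl.irrefl _)
        · exact cons_prefix_cons.mpr ⟨rfl, ih (Or.inl hPQ) hQP⟩
      · exact prefix_refl _

end List

/-- **Manber–Myers observation.**  Let `α` be a linearly ordered type, `P Q : List α`, and
`hash : α` strictly larger than every character occurring in `Q`.  Then `P` is a prefix of `Q`
iff `P ≤_lex Q` and `Q <_lex P ++ [hash]`, where `<_lex` is the lexicographic order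
`List.Lex (· < ·)` (under which a proper prefix is strictly smaller). -/
theorem stmt0 {α : Type*} [LinearOrder α] (P Q : List α) (hash : α)
    (hhash : ∀ c ∈ Q, c < hash) :
    P <+: Q ↔
      ((List.Lex (· < ·) P Q ∨ P = Q) ∧ List.Lex (· < ·) Q (P ++ [hash])) := by
  constructor
  · rintro ⟨R, rfl⟩
    exact ⟨(List.prefix_append P R).lex_or_eq,
      List.lex_append_append_singleton P fun c hc => hhash c (List.mem_append_right P hc)⟩
  · rintro ⟨hPQ, hQP⟩
    exact List.isPrefix_of_lex_of_lex_append_singleton hPQ hQP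
end

section
/- Let α be a linearly ordered type and let P, A, B, C be lists over α. If P is a prefix of A, P is a prefix of C, and A ≤_lex B ≤_lex C, then P is a prefix of B. Consequently, in any lexicographically sorted list of strings, the strings having P as a prefix occupy a contiguous interval of positions. -/
/-!
Induct on `P = p :: P'`. Both `p :: A' <_lex B` and `B <_lex p :: C'` force `B` to start
with `p`: a strictly smaller or larger head on either side would, by asymmetry, contradict
the other comparison, and `B = []` is below every nonempty list. Stripping the common head
leaves the same situation for `P'`.
-/

namespace List

variable {α : Type*} {r : α → α → Prop} [Std.Asymm r]

theorem Lex.exists_eq_cons_of_cons_lex_of_lex_cons {p : α} {A B C : List α}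
    (hAB : Lex r (p :: A) B) (hBC : Lex r B (p :: C)) :
    ∃ B', B = p :: B' ∧ Lex r A B' ∧ Lex r B' C := by
  cases hAB with
  | rel hpb =>
    cases hBC with
    | rel hbp => exact (_root_.asymm hpb hbp).elim
    | cons => exact (_root_.irrefl p hpb).elim
  | cons hAB' =>
    cases hBC with
    | rel hpp => exact (_root_.irrefl p hpp).elim
    | cons hBC' => exact ⟨_, rfl, hAB', hBC'⟩

theorem IsPrefix.of_lex_of_lex {P A B C : List α} (hA : P <+: A) (hC : P <+: C)
    (hAB : Lex r A B) (hBC : Lex r B C) : P <+: B := by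
  induction P generalizing A B C with
  | nil => exact nil_prefix
  | cons p P ih =>
    obtain ⟨A', rfl⟩ := hA
    obtain ⟨C', rfl⟩ := hC
    obtain ⟨B', rfl, hAB', hBC'⟩ := Lex.exists_eq_cons_of_cons_lex_of_lex_cons hAB hBC
    exact cons_prefix_cons.mpr ⟨rfl, ih (prefix_append _ _) (prefix_append _ _) hAB' hBC'⟩

end List

/-- Let `α` be a linearly ordered type and `P A B C : List α`.  If `P` is a prefix of `A`,
`P` is a prefix of `C`, and `A ≤_lex B ≤_lex C` (lexicographic order, under which a proper
prefix is smaller), then `P` is a prefix of `B`.  Hence in a lexicographically sorted list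
of strings, the strings having `P` as a prefix occupy a contiguous interval. -/
theorem stmt1 {α : Type*} [LinearOrder α] (P A B C : List α)
    (hA : P <+: A) (hC : P <+: C)
    (hAB : List.Lex (· < ·) A B ∨ A = B)
    (hBC : List.Lex (· < ·) B C ∨ B = C) :
    P <+: B := by
  rcases hAB with hAB | rfl
  · rcases hBC with hBC | rfl
    · exact hA.of_lex_of_lex hC hAB hBC
    · exact hC
  · exact hA
end

section
/- Let S be a list of length n ≥ 1 over a linearly ordered type α, and let M be the list of the n rotations rot 0 S, …, rot (n−1) S arranged in nondecreasing lexicographic order. Then the list L of last characters of the rows of M is a permutation of S, i.e., the multiset of elements of L equals the multiset of elements of S. -/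
/-- `rot i S` is the `i`-th rotation `(S.drop i) ++ (S.take i)` of the list `S`. -/
def rot {α : Type*} (i : ℕ) (S : List α) : List α := S.drop i ++ S.take i

/-- Nonstrict lexicographic order on lists (a proper prefix is smaller). -/
def lexLe {α : Type*} [LinearOrder α] (u v : List α) : Prop :=
  List.Lex (· < ·) u v ∨ u = v

/-!
The last character of `rot i S` is the character cyclically preceding position `i` of `S`,
so the last column of the unsorted matrix `rot 0 S, …, rot (n-1) S` is the rotation
`S.rotate (n - 1)`. Sorting the rows only permutes this column.
-/

theorem getLast?_rot {α : Type*} {S : List α} {i : ℕ} (hi : i < S.length) :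
    (rot i S).getLast? = S[(i + S.length - 1) % S.length]? := by
  rcases Nat.eq_zero_or_pos i with rfl | hi₀
  · simp [rot, List.getLast?_eq_getElem?, Nat.mod_eq_of_lt (show S.length - 1 < S.length by omega)]
  · have hmod : (i + S.length - 1) % S.length = i - 1 := by
      rw [show i + S.length - 1 = i - 1 + S.length by omega, Nat.add_mod_right,
        Nat.mod_eq_of_lt (by omega)]
    have htake : (S.take i).getLast? = S[i - 1]? := by
      simp [List.getLast?_eq_getElem?, Nat.min_eq_left hi.le, List.getElem?_take]
      omega
    rw [rot, List.getLast?_append, htake, hmod, List.getElem?_eq_getElem (by omega),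
      Option.some_or]

theorem map_range_getLast!_rot {α : Type*} [Inhabited α] (S : List α) :
    (List.range S.length).map (fun i => (rot i S).getLast!) = S.rotate (S.length - 1) := by
  refine List.ext_getElem (by simp) fun i hi _ => ?_
  rw [List.length_map, List.length_range] at hi
  rw [List.getElem_map, List.getElem_range, List.getElem_rotate]
  refine List.getLast!_of_getLast? ?_
  rw [getLast?_rot hi, List.getElem?_eq_getElem, show i + (S.length - 1) = i + S.length - 1 by omega]

theorem stmt3_general {α : Type*} [Inhabited α]
    (S : List α)
    (M : List (List α))
    (hperm : List.Perm M ((List.range S.length).map (fun i => rot i S))) :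
    List.Perm (M.map (fun r => r.getLast!)) S :=
  calc List.Perm (M.map (fun r => r.getLast!))
        ((List.range S.length).map (fun i => (rot i S).getLast!)) := by
        simpa only [List.map_map, Function.comp_def] using hperm.map (fun r => r.getLast!)
    _ = S.rotate (S.length - 1) := map_range_getLast!_rot S
    List.Perm _ S := List.rotate_perm S _

/-- Let `S` be a list of length `n ≥ 1` and let `M` be the list of the `n` rotations
`rot 0 S, …, rot (n-1) S` arranged in nondecreasing lexicographic order.  Then the list
`L` of last characters of the rows of `M` is a permutation of `S`. -/
theorem stmt3 {α : Type*} [LinearOrder α] [Inhabited α]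
    (S : List α) (hS : 1 ≤ S.length)
    (M : List (List α))
    (hperm : List.Perm M ((List.range S.length).map (fun i => rot i S)))
    (hsorted : M.Pairwise lexLe) :
    List.Perm (M.map (fun r => r.getLast!)) S :=
  stmt3_general S M hperm
end

section
/- Let S be a list of length n ≥ 1 over a linearly ordered type α, and let M be the list of the n rotations rot 0 S, …, rot (n−1) S arranged in nondecreasing lexicographic order. Then the list F of first characters of the rows of M equals the list of the characters of S sorted in nondecreasing order. -/
lemma rot_eq_getElem_cons {α : Type*} {S : List α} {i : ℕ} (hi : i < S.length) :
    rot i S = S[i] :: (S.drop (i + 1) ++ S.take i) := by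
  rw [rot, List.drop_eq_getElem_cons hi, List.cons_append]

lemma rot_ne_nil {α : Type*} {S : List α} {i : ℕ} (hi : i < S.length) : rot i S ≠ [] := by
  simp [rot_eq_getElem_cons hi]

lemma head!_rot {α : Type*} [Inhabited α] {S : List α} {i : ℕ} (hi : i < S.length) :
    (rot i S).head! = S[i] := by
  rw [rot_eq_getElem_cons hi, List.head!_cons]

lemma map_head!_rotations {α : Type*} [Inhabited α] (S : List α) :
    ((List.range S.length).map (fun i => rot i S)).map List.head! = S := by
  refine List.ext_getElem (by simp) fun i hi _ => ?_
  simp only [List.map_map, List.getElem_map, List.getElem_range, Function.comp_apply]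
  exact head!_rot (by simpa using hi)

lemma lexLe.head!_le {α : Type*} [LinearOrder α] [Inhabited α] {u v : List α}
    (hu : u ≠ []) (h : lexLe u v) : u.head! ≤ v.head! := by
  obtain ⟨a, u, rfl⟩ := List.exists_cons_of_ne_nil hu
  rcases h with h | rfl
  · cases h with
    | cons _ => exact le_rfl
    | rel hab => exact hab.le
  · exact le_rfl

theorem stmt4_general {α : Type*} [LinearOrder α] [Inhabited α]
    (S : List α)
    (M : List (List α))
    (hperm : List.Perm M ((List.range S.length).map (fun i => rot i S)))
    (hsorted : M.Pairwise lexLe) :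
    (M.map (fun r => r.head!)).Pairwise (· ≤ ·) ∧
      List.Perm (M.map (fun r => r.head!)) S := by
  have hne : ∀ r ∈ M, r ≠ [] := by
    intro r hr
    obtain ⟨i, hi, rfl⟩ := List.mem_map.1 (hperm.subset hr)
    exact rot_ne_nil (List.mem_range.1 hi)
  refine ⟨List.pairwise_map.2 (hsorted.imp_of_mem fun hu _ h => h.head!_le (hne _ hu)), ?_⟩
  simpa only [map_head!_rotations] using hperm.map List.head!

/-- Let `S` be a list of length `n ≥ 1` and let `M` be the list of the `n` rotations of `S`
arranged in nondecreasing lexicographic order.  Then the list `F` of first characters of the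
rows of `M` equals the list of the characters of `S` sorted in nondecreasing order, i.e. `F`
is a nondecreasingly sorted permutation of `S`. -/
theorem stmt4 {α : Type*} [LinearOrder α] [Inhabited α]
    (S : List α) (hS : 1 ≤ S.length)
    (M : List (List α))
    (hperm : List.Perm M ((List.range S.length).map (fun i => rot i S)))
    (hsorted : M.Pairwise lexLe) :
    (M.map (fun r => r.head!)).Pairwise (· ≤ ·) ∧
      List.Perm (M.map (fun r => r.head!)) S :=
  stmt4_general S M hperm hsorted
end

section
/- Let α be a linearly ordered type and # an element of α. Let T₁ and T₂ be lists over α all of whose characters are strictly greater than #. If the Burrows–Wheeler transforms of T₁ ++ [#] and T₂ ++ [#] are equal as lists (i.e., the lists of last characters of the lexicographically sorted rotations of T₁ ++ [#] and of T₂ ++ [#] coincide), then T₁ = T₂. -/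
namespace List

variable {α : Type*}

theorem map_range_rot_eq_cyclicPermutations {S : List α} (hS : S ≠ []) :
    (range S.length).map (rot · S) = S.cyclicPermutations := by
  refine ext_getElem (by simp [hS]) fun i hi _ => ?_
  rw [length_map, length_range] at hi
  simp only [getElem_map, getElem_range, getElem_cyclicPermutations, rot,
    rotate_eq_drop_append_take hi.le]

theorem map_rotate_cyclicPermutations (l : List α) (n : ℕ) :
    l.cyclicPermutations.map (·.rotate n) = (l.rotate n).cyclicPermutations := by
  rcases eq_or_ne l [] with rfl | hl
  · simp
  refine ext_getElem (by simp [hl]) fun i _ _ => ?_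
  simp only [getElem_map, getElem_cyclicPermutations, rotate_rotate, Nat.add_comm]

theorem take_succ_eq_getLast!_rotate_one_cons [Inhabited α] {l : List α} {k : ℕ}
    (hk : k < l.length) :
    l.take (k + 1) = (l.rotate 1).getLast! :: (l.rotate 1).take k := by
  obtain ⟨a, t, rfl⟩ := exists_cons_of_ne_nil (ne_nil_of_length_pos (Nat.zero_lt_of_lt hk))
  rw [length_cons, Nat.lt_succ_iff] at hk
  simp [take_append_of_le_length hk]

theorem Perm.map_take_succ_perm_of_perm_cyclicPermutations [Inhabited α]
    {S : List α} {M : List (List α)} (hM : M ~ S.cyclicPermutations) {k : ℕ}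
    (hk : k < S.length) :
    M.map (·.take (k + 1)) ~ M.map (fun r => r.getLast! :: r.take k) := by
  have hrows : M.map (·.take (k + 1)) =
      (M.map (·.rotate 1)).map (fun r => r.getLast! :: r.take k) := by
    rw [map_map]
    refine map_congr_left fun r hr => take_succ_eq_getLast!_rotate_one_cons ?_
    rwa [length_mem_cyclicPermutations S (hM.subset hr)]
  have hclosed : M.map (·.rotate 1) ~ M :=
    calc M.map (·.rotate 1) ~ S.cyclicPermutations.map (·.rotate 1) := hM.map _
      _ = S.cyclicPermutations.rotate 1 := by
        rw [map_rotate_cyclicPermutations, cyclicPermutations_rotate]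
      _ ~ M := (rotate_perm _ _).trans hM.symm
  exact hrows ▸ hclosed.map _

theorem eq_of_append_singleton_isRotated {a : α} {T₁ T₂ : List α} (ha : a ∉ T₁)
    (h : T₁ ++ [a] ~r T₂ ++ [a]) : T₁ = T₂ := by
  obtain ⟨n, hn, hrot⟩ := isRotated_iff_mod.mp h
  rw [length_append, length_singleton] at hn
  rcases hn.eq_or_lt with rfl | hn
  · rw [← length_singleton (a := a), ← length_append, rotate_length] at hrot
    exact append_cancel_right hrot
  rw [rotate_eq_drop_append_take (by simp; omega), drop_append_of_le_length (by omega),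
    take_append_of_le_length (by omega)] at hrot
  rcases eq_nil_or_concat (T₁.take n) with hnil | ⟨x, b, hxb⟩
  · have hdrop : T₁.drop n = T₁ := by simpa [hnil] using take_append_drop n T₁
    rw [hnil, hdrop, append_nil] at hrot
    exact append_cancel_right hrot
  · rw [hxb, concat_eq_append, ← append_assoc, append_singleton_inj] at hrot
    have hmem : a ∈ T₁.take n := by
      rw [hxb, concat_eq_append, ← hrot.2]
      exact mem_concat_self
    exact absurd (take_subset n T₁ hmem) ha

theorem lexLe_antisymm [LinearOrder α] {u v : List α} (huv : lexLe u v) (hvu : lexLe v u) :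
    u = v := by
  rcases huv with huv | rfl
  · rcases hvu with hvu | rfl
    · exact absurd hvu (asymm huv)
    · rfl
  · rfl

theorem Lex.lexLe_take [LinearOrder α] {u v : List α} (h : Lex (· < ·) u v) (k : ℕ) :
    lexLe (u.take k) (v.take k) := by
  induction h generalizing k with
  | nil =>
    rw [take_nil]
    generalize take k _ = w
    cases w
    exacts [Or.inr rfl, Or.inl Lex.nil]
  | @cons a u v _ ih =>
    cases k with
    | zero => exact Or.inr rfl
    | succ k => rcases ih k with h | h <;> simp [lexLe, h, Lex.cons]
  | rel hab =>
    cases k with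
    | zero => exact Or.inr rfl
    | succ k => exact Or.inl (Lex.rel hab)

theorem lexLe_take [LinearOrder α] {u v : List α} (h : lexLe u v) (k : ℕ) :
    lexLe (u.take k) (v.take k) := by
  rcases h with h | rfl
  · exact h.lexLe_take k
  · exact Or.inr rfl

theorem Pairwise.map_take_of_lexLe [LinearOrder α] {M : List (List α)} (hM : M.Pairwise lexLe)
    (k : ℕ) : (M.map (·.take k)).Pairwise lexLe :=
  hM.map _ fun _ _ h => lexLe_take h k

theorem eq_of_perm_cyclicPermutations_of_map_getLast!_eq [LinearOrder α] [Inhabited α]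
    {S₁ S₂ : List α} (hS₁ : S₁ ≠ []) (hS₂ : S₂ ≠ []) {M₁ M₂ : List (List α)}
    (hperm₁ : M₁ ~ S₁.cyclicPermutations) (hperm₂ : M₂ ~ S₂.cyclicPermutations)
    (hsorted₁ : M₁.Pairwise lexLe) (hsorted₂ : M₂.Pairwise lexLe)
    (heq : M₁.map getLast! = M₂.map getLast!) : M₁ = M₂ := by
  have hlen : M₁.length = M₂.length := by simpa using congrArg length heq
  have hlenS : S₁.length = S₂.length := by
    simpa [hperm₁.length_eq, hperm₂.length_eq, hS₁, hS₂] using hlen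
  have hcons (k : ℕ) (M : List (List α)) : M.map (fun r => r.getLast! :: r.take k) =
      zipWith (· :: ·) (M.map getLast!) (M.map (·.take k)) := by
    rw [zipWith_map, zipWith_self]
  have hprefix : ∀ k ≤ S₁.length, M₁.map (·.take k) = M₂.map (·.take k) := by
    intro k hk
    induction k with
    | zero => simpa using hlen
    | succ k ih =>
      refine Perm.eq_of_pairwise (fun _ _ _ _ => lexLe_antisymm)
        (hsorted₁.map_take_of_lexLe _) (hsorted₂.map_take_of_lexLe _) ?_
      calc M₁.map (·.take (k + 1)) ~ M₁.map (fun r => r.getLast! :: r.take k) :=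
            hperm₁.map_take_succ_perm_of_perm_cyclicPermutations (by omega)
        _ = M₂.map (fun r => r.getLast! :: r.take k) := by
            rw [hcons, hcons, heq, ih (by omega)]
        _ ~ M₂.map (·.take (k + 1)) :=
            (hperm₂.map_take_succ_perm_of_perm_cyclicPermutations (by omega)).symm
  have htake {S : List α} {M : List (List α)} (hM : M ~ S.cyclicPermutations) :
      M.map (·.take S.length) = M :=
    (map_congr_left fun r hr =>
      take_of_length_le (length_mem_cyclicPermutations S (hM.subset hr)).le).trans (map_id' M)
  rw [← htake hperm₁, ← htake hperm₂, hprefix _ le_rfl, hlenS]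

end List

theorem stmt5_general {α : Type*} [LinearOrder α] [Inhabited α] (hash : α)
    (T₁ T₂ : List α)
    (h₁ : ∀ c ∈ T₁, hash < c)
    (M₁ M₂ : List (List α))
    (hperm₁ : List.Perm M₁ ((List.range (T₁ ++ [hash]).length).map
      (fun i => rot i (T₁ ++ [hash]))))
    (hsorted₁ : M₁.Pairwise lexLe)
    (hperm₂ : List.Perm M₂ ((List.range (T₂ ++ [hash]).length).map
      (fun i => rot i (T₂ ++ [hash]))))
    (hsorted₂ : M₂.Pairwise lexLe)
    (heq : M₁.map (fun r => r.getLast!) = M₂.map (fun r => r.getLast!)) :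
    T₁ = T₂ := by
  have hS₁ : T₁ ++ [hash] ≠ [] := by simp
  have hS₂ : T₂ ++ [hash] ≠ [] := by simp
  rw [List.map_range_rot_eq_cyclicPermutations hS₁] at hperm₁
  rw [List.map_range_rot_eq_cyclicPermutations hS₂] at hperm₂
  have hM : M₁ = M₂ := List.eq_of_perm_cyclicPermutations_of_map_getLast!_eq hS₁ hS₂
    hperm₁ hperm₂ hsorted₁ hsorted₂ heq
  have hrot : T₂ ++ [hash] ~r T₁ ++ [hash] := List.mem_cyclicPermutations_iff.mp <|
    hperm₁.subset (hM ▸ hperm₂.symm.subset (List.mem_cyclicPermutations_self _))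
  exact List.eq_of_append_singleton_isRotated (fun h => lt_irrefl hash (h₁ hash h)) hrot.symm

/-- **Invertibility of the Burrows–Wheeler transform with a sentinel.**
Let `hash` be strictly smaller than every character of the lists `T₁` and `T₂`.
Let `Mᵢ` be the lexicographically sorted list of all rotations of `Tᵢ ++ [hash]`.
If the lists of last characters of the rows of `M₁` and of `M₂` (the Burrows–Wheeler
transforms) coincide, then `T₁ = T₂`. -/
theorem stmt5 {α : Type*} [LinearOrder α] [Inhabited α] (hash : α)
    (T₁ T₂ : List α)
    (h₁ : ∀ c ∈ T₁, hash < c) (h₂ : ∀ c ∈ T₂, hash < c)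
    (M₁ M₂ : List (List α))
    (hperm₁ : List.Perm M₁ ((List.range (T₁ ++ [hash]).length).map
      (fun i => rot i (T₁ ++ [hash]))))
    (hsorted₁ : M₁.Pairwise lexLe)
    (hperm₂ : List.Perm M₂ ((List.range (T₂ ++ [hash]).length).map
      (fun i => rot i (T₂ ++ [hash]))))
    (hsorted₂ : M₂.Pairwise lexLe)
    (heq : M₁.map (fun r => r.getLast!) = M₂.map (fun r => r.getLast!)) :
    T₁ = T₂ :=
  stmt5_general hash T₁ T₂ h₁ M₁ M₂ hperm₁ hsorted₁ hperm₂ hsorted₂ heq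
end

section
/- Let S be a list of length n over a linearly ordered type α whose n rotations are pairwise distinct, and let M be the list of the n rotations sorted in increasing lexicographic order, with rows indexed 1,…,n. If 1 ≤ i < j ≤ n and the rows M[i] and M[j] have the same last character, then the right cyclic shift of M[i] (obtained by moving its last character to the front) is lexicographically strictly smaller than the right cyclic shift of M[j]. In other words, rotations ending with the same character appear in the same relative order before and after the shift. -/
/-- The right cyclic shift of a list: its last character is moved to the front. -/
def rshift {α : Type*} [Inhabited α] (r : List α) : List α :=
  r.getLast! :: r.dropLast

/-! All rotations of `S` have length `|S|`, so two rows ending in the same character are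
`a ++ [c]` and `b ++ [c]` with `|a| = |b|`. For lists of equal length, `a ++ [c] < b ++ [c]` forces
`a < b` (equality would give `c < c`), hence `c :: a < c :: b`. -/

@[simp]
theorem length_rot {α : Type*} (i : ℕ) (S : List α) : (rot i S).length = S.length := by
  simp only [rot, List.length_append, List.length_drop, List.length_take]
  omega

@[simp]
theorem rshift_concat {α : Type*} [Inhabited α] (l : List α) (a : α) :
    rshift (l ++ [a]) = a :: l := by
  simp [rshift]

theorem List.lex_append_iff_of_length_eq {α : Type*} {r : α → α → Prop} :
    ∀ {a b c d : List α}, a.length = b.length →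
      (Lex r (a ++ c) (b ++ d) ↔ Lex r a b ∨ a = b ∧ Lex r c d)
  | [], [], _, _, _ => by simp
  | x :: a, y :: b, c, d, h => by
    rw [cons_append, cons_append, cons_lex_cons_iff, cons_lex_cons_iff,
      lex_append_iff_of_length_eq (by simpa using h), cons.injEq]
    tauto

theorem lex_rshift_of_lex {α : Type*} [Inhabited α] {r : α → α → Prop} (hr : ∀ x, ¬ r x x)
    {l₁ l₂ : List α} (hlen : l₁.length = l₂.length) (hlast : l₁.getLast! = l₂.getLast!)
    (h : List.Lex r l₁ l₂) : List.Lex r (rshift l₁) (rshift l₂) := by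
  rcases l₁.eq_nil_or_concat' with rfl | ⟨a, c, rfl⟩
  · obtain rfl : l₂ = [] := List.eq_nil_of_length_eq_zero hlen.symm
    exact absurd h List.not_lex_nil
  rcases l₂.eq_nil_or_concat' with rfl | ⟨b, d, rfl⟩
  · simp at hlen
  simp only [List.getLast!_eq_getLast?_getD, List.getLast?_append, List.getLast?_singleton,
    Option.some_or, Option.getD_some] at hlast
  simp only [List.length_append, List.length_singleton, Nat.add_right_cancel_iff] at hlen
  subst hlast
  rw [rshift_concat, rshift_concat]
  rcases (List.lex_append_iff_of_length_eq hlen).1 h with hab | ⟨-, hcc⟩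
  · exact .cons hab
  · exact absurd ((List.lex_singleton_iff c c).1 hcc) (hr c)

theorem stmt6_general {α : Type*} [LinearOrder α] [Inhabited α] (S : List α)
    (M : List (List α))
    (hperm : List.Perm M ((List.range S.length).map (fun i => rot i S)))
    (hsorted : M.Pairwise (List.Lex (· < ·)))
    (i j : Fin M.length) (hij : i < j)
    (hlast : (M.get i).getLast! = (M.get j).getLast!) :
    List.Lex (· < ·) (rshift (M.get i)) (rshift (M.get j)) := by
  have hlen : ∀ row ∈ M, row.length = S.length := fun row hrow => by
    obtain ⟨k, -, rfl⟩ := List.mem_map.mp (hperm.subset hrow)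
    exact length_rot k S
  exact lex_rshift_of_lex lt_irrefl
    ((hlen _ (M.get_mem i)).trans (hlen _ (M.get_mem j)).symm) hlast
    (List.pairwise_iff_get.mp hsorted i j hij)

/-- **Order preservation of the LF-mapping.**  Let `S` be a list whose rotations are pairwise
distinct, and let `M` be the list of the rotations of `S` sorted in (strictly) increasing
lexicographic order.  If rows `M[i]` and `M[j]` with `i < j` have the same last character,
then the right cyclic shift of `M[i]` is lexicographically strictly smaller than the right
cyclic shift of `M[j]`. -/
theorem stmt6 {α : Type*} [LinearOrder α] [Inhabited α] (S : List α)
    (M : List (List α))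
    (hnodup : ((List.range S.length).map (fun i => rot i S)).Nodup)
    (hperm : List.Perm M ((List.range S.length).map (fun i => rot i S)))
    (hsorted : M.Pairwise (List.Lex (· < ·)))
    (i j : Fin M.length) (hij : i < j)
    (hlast : (M.get i).getLast! = (M.get j).getLast!) :
    List.Lex (· < ·) (rshift (M.get i)) (rshift (M.get j)) :=
  stmt6_general S M hperm hsorted i j hij hlast
end

section
/- Let S be a list of length n over a linearly ordered type α in which some character occurs exactly once (so that the n rotations of S are pairwise distinct), and let M be the list of the n rotations sorted in increasing lexicographic order, rows indexed 1,…,n. Let L i be the last character of row M[i]; for a character c let C(c) be the number of positions of S holding a character strictly smaller than c, and let Occ(c,i) be the number of indices j with 1 ≤ j ≤ i and L j = c. Then for every row index 1 ≤ i ≤ n, the right cyclic shift of M[i] (its last character moved to the front) equals row M[C(L i) + Occ(L i, i)]. -/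
open List

namespace List

variable {α : Type*}

theorem lex_append_iff_of_length_eq_s7 {r : α → α → Prop} :
    ∀ {u x : List α}, u.length = x.length → ∀ {s t : List α},
      Lex r (u ++ s) (x ++ t) ↔ Lex r u x ∨ u = x ∧ Lex r s t
  | [], [], _, _, _ => by simp
  | a :: u, b :: x, h, _, _ => by
    simp only [cons_append, cons_lex_cons_iff, cons.injEq,
      lex_append_iff_of_length_eq_s7 (Nat.succ.inj h)]
    tauto

theorem countP_or_of_disjoint {p q : α → Bool} {l : List α} (h : ∀ x ∈ l, ¬(p x ∧ q x)) :
    l.countP (fun x => p x || q x) = l.countP p + l.countP q := by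
  rw [countP_eq_countP_filter_add l _ p, countP_filter, countP_filter]
  congr 1 <;> refine countP_congr fun x hx => ?_ <;> grind

theorem count_take_add_one_map {β : Type*} [DecidableEq β] (f : α → β) {l : List α} {i : ℕ}
    (hi : i < l.length) :
    ((l.map f).take (i + 1)).count (f l[i]) = (l.take i).countP (f · = f l[i]) + 1 := by
  rw [← map_take, take_add_one, getElem?_eq_getElem hi, Option.toList_some, map_append,
    count_append, count_eq_countP, countP_map, map_singleton, count_singleton_self]
  rfl

theorem Pairwise.filter_lt_getElem [Preorder α] [DecidableLT α] {l : List α}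
    (h : l.Pairwise (· < ·)) {i : ℕ} (hi : i < l.length) :
    l.filter (· < l[i]) = l.take i := by
  have hsplit := take_append_drop i l ▸ h
  rw [pairwise_append, drop_eq_getElem_cons hi, pairwise_cons] at hsplit
  obtain ⟨-, ⟨hgt, -⟩, hlt⟩ := hsplit
  calc l.filter (· < l[i]) = (l.take i ++ l.drop i).filter (· < l[i]) := by
        rw [take_append_drop]
    _ = l.take i := by
      rw [filter_append, filter_eq_self.2, filter_eq_nil_iff.2, append_nil]
      · rw [drop_eq_getElem_cons hi]
        rintro x (_ | ⟨_, hx⟩)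
        · simp
        · simpa using (hgt x hx).not_gt
      · exact fun x hx => by simpa using hlt x hx l[i] mem_cons_self

theorem Pairwise.countP_lt_getElem [Preorder α] [DecidableLT α] {l : List α}
    (h : l.Pairwise (· < ·)) {i : ℕ} (hi : i < l.length) :
    l.countP (· < l[i]) = i := by
  rw [countP_eq_length_filter, h.filter_lt_getElem hi, length_take, min_eq_left hi.le]

theorem ne_nil_of_mem_cyclicPermutations {l r : List α} (hl : l ≠ [])
    (hr : r ∈ l.cyclicPermutations) : r ≠ [] := by
  rw [← length_pos_iff, length_mem_cyclicPermutations l hr]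
  exact length_pos_iff.2 hl

theorem map_head!_cyclicPermutations [Inhabited α] {l : List α} (hl : l ≠ []) :
    l.cyclicPermutations.map head! = l := by
  refine ext_getElem (by simp [length_cyclicPermutations_of_ne_nil l hl]) fun k hk _ => ?_
  rw [getElem_map, getElem_cyclicPermutations, head!_eq_head?_getD, head?_rotate ‹_›,
    getElem?_eq_getElem ‹_›, Option.getD_some]

end List

theorem map_rot_range_eq_cyclicPermutations {α : Type*} {S : List α} (hS : S ≠ []) :
    (range S.length).map (rot · S) = S.cyclicPermutations := by
  refine ext_getElem (by simp [length_cyclicPermutations_of_ne_nil S hS]) fun k hk _ => ?_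
  rw [getElem_map, getElem_range, getElem_cyclicPermutations, rot,
    rotate_eq_drop_append_take (by simp at hk; omega)]

section rshift

variable {α : Type*} [Inhabited α]

@[simp] theorem rshift_append_singleton (u : List α) (a : α) : rshift (u ++ [a]) = a :: u := by
  simp [rshift]

theorem isRotated_rshift {r : List α} (hr : r ≠ []) : rshift r ~r r := by
  obtain ⟨u, a, rfl⟩ := (eq_nil_or_concat' r).resolve_left hr
  rw [rshift_append_singleton]
  exact (isRotated_concat a u).symm

theorem rshift_injOn : Set.InjOn rshift {r : List α | r ≠ []} := by
  rintro r hr t ht h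
  obtain ⟨u, a, rfl⟩ := (eq_nil_or_concat' r).resolve_left hr
  obtain ⟨x, b, rfl⟩ := (eq_nil_or_concat' t).resolve_left ht
  simp only [rshift_append_singleton, cons.injEq] at h
  rw [h.1, h.2]

theorem rshift_lt_rshift_iff [LinearOrder α] {r t : List α} (hr : r ≠ []) (ht : t ≠ [])
    (hrt : r.length = t.length) :
    rshift r < rshift t ↔ r.getLast! < t.getLast! ∨ r.getLast! = t.getLast! ∧ r < t := by
  obtain ⟨u, a, rfl⟩ := (eq_nil_or_concat' r).resolve_left hr
  obtain ⟨x, b, rfl⟩ := (eq_nil_or_concat' t).resolve_left ht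
  have hux : u.length = x.length := by simpa using hrt
  change Lex (· < ·) _ _ ↔ _ ∨ _ ∧ Lex (· < ·) _ _
  simp only [rshift_append_singleton, cons_lex_cons_iff, lex_append_iff_of_length_eq_s7 hux,
    not_lex_nil, and_false, or_false, getLast!_eq_getLast?_getD, getLast?_append,
    getLast?_singleton, Option.some_or, Option.getD_some]
  grind

theorem eq_countP_add_countP_of_getElem_eq_rshift [LinearOrder α] {M : List (List α)} {n : ℕ}
    (hsorted : M.Pairwise (· < ·)) (hne : ∀ r ∈ M, r ≠ [])
    (hlen : ∀ r ∈ M, r.length = n) (hshift : M.map rshift ~ M) {i s : ℕ} (hi : i < M.length)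
    (hs : s < M.length) (his : M[s] = rshift M[i]) :
    s = M.countP (·.getLast! < M[i].getLast!) +
      (M.take i).countP (·.getLast! = M[i].getLast!) := by
  have hMi := getElem_mem hi
  calc s = M.countP (· < M[s]) := (hsorted.countP_lt_getElem hs).symm
    _ = M.countP (fun r => rshift r < rshift M[i]) := by
      rw [← hshift.countP_eq, countP_map, his]
      rfl
    _ = M.countP (fun r => r.getLast! < M[i].getLast! ||
          (r.getLast! = M[i].getLast! && r < M[i])) := by
      refine countP_congr fun r hr => ?_
      simpa using rshift_lt_rshift_iff (hne r hr) (hne _ hMi) ((hlen r hr).trans (hlen _ hMi).symm)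
    _ = M.countP (·.getLast! < M[i].getLast!) +
          (M.filter (· < M[i])).countP (·.getLast! = M[i].getLast!) := by
      rw [countP_or_of_disjoint, countP_filter]
      intro r _ h
      simp only [Bool.and_eq_true, decide_eq_true_eq] at h
      exact h.1.ne h.2.1
    _ = _ := by rw [hsorted.filter_lt_getElem hi]

theorem perm_map_rshift_self {S : List α} (hS : S ≠ []) {M : List (List α)}
    (hM : M ~ S.cyclicPermutations) (hnd : M.Nodup) : M.map rshift ~ M := by
  have hrot : ∀ r ∈ M, r ~r S := fun r hr => mem_cyclicPermutations_iff.1 (hM.subset hr)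
  have hne : ∀ r ∈ M, r ≠ [] := fun r hr => ne_nil_of_mem_cyclicPermutations hS (hM.subset hr)
  refine ((hnd.map_on fun r hr t ht => rshift_injOn (hne r hr) (hne t ht)).subperm ?_)
    |>.perm_of_length_le (by simp)
  intro _ hr
  obtain ⟨t, ht, rfl⟩ := mem_map.1 hr
  exact hM.mem_iff.2 <|
    mem_cyclicPermutations_iff.2 ((isRotated_rshift (hne t ht)).trans (hrot t ht))

theorem perm_map_getLast! {S : List α} (hS : S ≠ []) {M : List (List α)}
    (hM : M ~ S.cyclicPermutations) (hshift : M.map rshift ~ M) : M.map getLast! ~ S :=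
  calc M.map getLast! = (M.map rshift).map head! := by rw [map_map]; rfl
    _ ~ M.map head! := hshift.map _
    _ ~ S.cyclicPermutations.map head! := hM.map _
    _ = S := map_head!_cyclicPermutations hS

end rshift

theorem stmt7_general {α : Type*} [LinearOrder α] [Inhabited α] (S : List α)
    (M : List (List α))
    (hperm : List.Perm M ((List.range S.length).map (fun i => rot i S)))
    (hsorted : M.Pairwise (List.Lex (· < ·)))
    (i : Fin M.length) :
    ∃ h : (S.filter (fun a => a < (M.get i).getLast!)).length +
            ((M.map (fun r => r.getLast!)).take ((i : ℕ) + 1)).count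
              ((M.get i).getLast!) - 1 < M.length,
      rshift (M.get i) =
        M.get ⟨(S.filter (fun a => a < (M.get i).getLast!)).length +
            ((M.map (fun r => r.getLast!)).take ((i : ℕ) + 1)).count
              ((M.get i).getLast!) - 1, h⟩ := by
  obtain ⟨i, hi⟩ := i
  simp only [get_eq_getElem]
  have hS : S ≠ [] := by
    rintro rfl
    simp [hperm.length_eq] at hi
  rw [map_rot_range_eq_cyclicPermutations hS] at hperm
  have hshift := perm_map_rshift_self hS hperm (hsorted.imp ne_of_lt)
  obtain ⟨s, hs, his⟩ := mem_iff_getElem.1 (hshift.subset (mem_map_of_mem (getElem_mem hi)))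
  have hidx := eq_countP_add_countP_of_getElem_eq_rshift hsorted
    (fun r hr => ne_nil_of_mem_cyclicPermutations hS (hperm.subset hr))
    (fun r hr => length_mem_cyclicPermutations S (hperm.subset hr)) hshift hi hs his
  have hC : (S.filter (· < M[i].getLast!)).length = M.countP (·.getLast! < M[i].getLast!) := by
    rw [← countP_eq_length_filter, ← (perm_map_getLast! hS hperm hshift).countP_eq, countP_map]
    rfl
  have hOcc := count_take_add_one_map getLast! hi
  have hlf : (S.filter (· < M[i].getLast!)).length +
      ((M.map getLast!).take (i + 1)).count M[i].getLast! - 1 = s := by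
    omega
  exact ⟨hlf ▸ hs, by simp only [hlf, his]⟩

/-- **Correctness of the LF-computation of the FM-index.**
Let `S` be a list in which some character occurs exactly once (so its rotations are pairwise
distinct) and let `M` be the list of the rotations of `S` sorted in increasing lexicographic
order (rows indexed here from `0`).  For a row index `i`, let `L i` be the last character of
row `M[i]`, let `C c` be the number of positions of `S` holding a character strictly smaller
than `c`, and let `Occ c i` be the number of rows among the first `i+1` whose last character
is `c`.  Then the right cyclic shift of `M[i]` equals the row of `M` with (0-based) index
`C (L i) + Occ (L i) i - 1`. -/
theorem stmt7 {α : Type*} [LinearOrder α] [Inhabited α] (S : List α)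
    (hone : ∃ c, S.count c = 1)
    (M : List (List α))
    (hperm : List.Perm M ((List.range S.length).map (fun i => rot i S)))
    (hsorted : M.Pairwise (List.Lex (· < ·)))
    (i : Fin M.length) :
    ∃ h : (S.filter (fun a => a < (M.get i).getLast!)).length +
            ((M.map (fun r => r.getLast!)).take ((i : ℕ) + 1)).count
              ((M.get i).getLast!) - 1 < M.length,
      rshift (M.get i) =
        M.get ⟨(S.filter (fun a => a < (M.get i).getLast!)).length +
            ((M.map (fun r => r.getLast!)).take ((i : ℕ) + 1)).count
              ((M.get i).getLast!) - 1, h⟩ :=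
  stmt7_general S M hperm hsorted i
end

section
/- Let T be a list of length n over a type α, let # be an element of α not occurring in T, set S = T ++ [#], and let P be a nonempty list over α in which # does not occur. Then the number of indices i with 0 ≤ i ≤ n such that P is a prefix of rot i S equals the number of positions at which P occurs as a substring of T, i.e., the number of indices i with 0 ≤ i ≤ n − |P| such that P = (T.drop i).take |P|. -/
/-! A pattern avoiding `#` that is a prefix of the rotation `T.drop i ++ # :: T.take i`
cannot reach the `#`, so it is already a prefix of `T.drop i`, i.e. it occurs in `T` at `i`. -/

theorem List.prefix_append_cons_iff_of_notMem {α : Type*} {P L M : List α} {a : α}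
    (ha : a ∉ P) : P <+: L ++ a :: M ↔ P <+: L := by
  refine ⟨fun h => ?_, fun h => h.trans (List.prefix_append _ _)⟩
  rcases List.prefix_or_prefix_of_prefix h (List.prefix_append L (a :: M)) with hPL | ⟨t, rfl⟩
  · exact hPL
  · rw [List.prefix_append_right_inj, List.prefix_cons_iff] at h
    rcases h with rfl | ⟨t, rfl, -⟩
    · simp
    · simp at ha

theorem rot_append_singleton {α : Type*} {T : List α} {i : ℕ} (hi : i ≤ T.length) (a : α) :
    rot i (T ++ [a]) = T.drop i ++ a :: T.take i := by
  simp [rot, List.drop_append_of_le_length hi, List.take_append_of_le_length hi]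

theorem stmt9_general {α : Type*} [DecidableEq α] (T : List α) (hash : α)
    (P : List α) (hPhash : hash ∉ P) :
    ((Finset.range (T.length + 1)).filter
        (fun i => P <+: rot i (T ++ [hash]))).card =
      ((Finset.range (T.length - P.length + 1)).filter
        (fun i => P = (T.drop i).take P.length)).card := by
  congr 1
  ext i
  simp only [Finset.mem_filter, Finset.mem_range, Nat.lt_succ_iff]
  constructor
  · rintro ⟨hi, hpre⟩
    rw [rot_append_singleton hi, List.prefix_append_cons_iff_of_notMem hPhash] at hpre
    have hlen : P.length ≤ T.length - i := by simpa using hpre.length_le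
    exact ⟨by omega, List.prefix_iff_eq_take.mp hpre⟩
  · rintro ⟨hi, hocc⟩
    refine ⟨by omega, ?_⟩
    rw [rot_append_singleton (by omega), List.prefix_append_cons_iff_of_notMem hPhash]
    exact List.prefix_iff_eq_take.mpr hocc

/-- **Occurrences of a pattern vs. rows of the Burrows–Wheeler rotation matrix.**
Let `T` be a list of length `n`, `hash` an element not occurring in `T`, `S = T ++ [hash]`,
and `P` a nonempty list in which `hash` does not occur.  Then the number of indices
`0 ≤ i ≤ n` such that `P` is a prefix of `rot i S` equals the number of indices
`0 ≤ i ≤ n - P.length` such that `P = (T.drop i).take P.length`, i.e. the number of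
positions at which `P` occurs as a substring of `T`. -/
theorem stmt9 {α : Type*} [DecidableEq α] (T : List α) (hash : α) (hhash : hash ∉ T)
    (P : List α) (hP : P ≠ []) (hPhash : hash ∉ P) :
    ((Finset.range (T.length + 1)).filter
        (fun i => P <+: rot i (T ++ [hash]))).card =
      ((Finset.range (T.length - P.length + 1)).filter
        (fun i => P = (T.drop i).take P.length)).card :=
  stmt9_general T hash P hPhash
end

section
/- Call a natural number b tagged if b ≥ 128 and untagged if b < 128; a tagged codeword is a nonempty list of natural numbers whose first element is tagged and whose remaining elements are all untagged. Let cw₁, …, cw_m be tagged codewords, let D = cw₁ ++ ⋯ ++ cw_m, and let cw be a tagged codeword occurring at position q in D (i.e., cw is a prefix of D.drop q). Then q is a codeword boundary, i.e., q = |cw₁ ++ ⋯ ++ cw_{j−1}| for some 1 ≤ j ≤ m, and moreover cw is a prefix of cw_j. -/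
/-- A tagged codeword: a nonempty list of natural numbers (bytes) whose first element is
tagged (`≥ 128`) and whose remaining elements are all untagged (`< 128`). -/
def IsTaggedCodeword (l : List ℕ) : Prop :=
  ∃ a t, l = a :: t ∧ 128 ≤ a ∧ ∀ b ∈ t, b < 128

/-!
Every codeword starts with its only tagged byte, so the tagged positions of the concatenation are
exactly the codeword boundaries. An occurrence of a tagged codeword therefore starts at a boundary,
and it cannot run past the end of that codeword, where the next tagged byte (or the end of the
text) begins.
-/

theorem List.IsPrefix.prefix_of_head?_not_mem {α : Type*} {t t₁ l : List α} (h : t <+: t₁ ++ l)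
    (hl : ∀ x ∈ l.head?, x ∉ t) : t <+: t₁ := by
  rcases le_or_gt t.length t₁.length with hlen | hlen
  · exact (List.isPrefix_append_of_length hlen).1 h
  · have hget : t[t₁.length] = (t₁ ++ l)[t₁.length]'(hlen.trans_le h.length_le) := h.getElem hlen
    rw [List.getElem_append_right le_rfl] at hget
    exact absurd (List.getElem_mem hlen) (hl _ (by simp [hget, List.head?_eq_getElem?]))

namespace IsTaggedCodeword

variable {cw c l : List ℕ}

theorem ne_nil (hc : IsTaggedCodeword c) : c ≠ [] := by
  obtain ⟨a, t, rfl, -⟩ := hc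
  exact List.cons_ne_nil a t

theorem prefix_of_prefix_append (hcw : IsTaggedCodeword cw) (hc : c ≠ [])
    (hl : ∀ x ∈ l.head?, 128 ≤ x) (h : cw <+: c ++ l) : cw <+: c := by
  obtain ⟨a, t, rfl, -, ht⟩ := hcw
  obtain ⟨a₁, t₁, rfl⟩ := List.exists_cons_of_ne_nil hc
  rw [List.cons_append, List.cons_prefix_cons] at h
  exact List.cons_prefix_cons.2
    ⟨h.1, h.2.prefix_of_head?_not_mem fun x hx hxt => (ht x hxt).not_ge (hl x hx)⟩

theorem not_prefix_drop_append (hcw : IsTaggedCodeword cw) (hc : IsTaggedCodeword c) {q : ℕ}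
    (hq0 : q ≠ 0) (hq : q < c.length) : ¬cw <+: (c ++ l).drop q := by
  obtain ⟨a, t, rfl, ha, -⟩ := hcw
  obtain ⟨a₁, t₁, rfl, -, ht₁⟩ := hc
  obtain ⟨q, rfl⟩ := Nat.exists_eq_succ_of_ne_zero hq0
  have hq' : q < t₁.length := by simpa using hq
  rw [List.cons_append, List.drop_succ_cons, List.drop_append_of_le_length hq'.le,
    List.drop_eq_getElem_cons hq', List.cons_append, List.cons_prefix_cons]
  rintro ⟨rfl, -⟩
  exact (ht₁ _ (List.getElem_mem hq')).not_ge ha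

theorem head?_flatten {cws : List (List ℕ)} (hcws : ∀ c ∈ cws, IsTaggedCodeword c) :
    ∀ x ∈ cws.flatten.head?, 128 ≤ x := by
  cases cws with
  | nil => simp
  | cons c tl =>
    obtain ⟨a, t, rfl, ha, -⟩ := hcws c List.mem_cons_self
    simpa using ha

end IsTaggedCodeword

/-- **Self-synchronization of byte-aligned tagged codes.**
Let `cws = [cw₁, …, cw_m]` be a list of tagged codewords, `D` their concatenation, and let
`cw` be a tagged codeword occurring at position `q` of `D` (i.e. `cw` is a prefix of
`D.drop q`).  Then `q` is a codeword boundary: `q` is the length of the concatenation of the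
first `j` codewords for some `j < m`, and moreover `cw` is a prefix of `cw_{j+1}`. -/
theorem stmt10 (cws : List (List ℕ)) (hcws : ∀ cw ∈ cws, IsTaggedCodeword cw)
    (cw : List ℕ) (hcw : IsTaggedCodeword cw) (q : ℕ)
    (hq : cw <+: (cws.flatten).drop q) :
    ∃ j, ∃ hj : j < cws.length,
      q = ((cws.take j).flatten).length ∧ cw <+: cws.get ⟨j, hj⟩ := by
  induction cws generalizing q with
  | nil =>
    obtain ⟨a, t, rfl, -⟩ := hcw
    simp at hq
  | cons c tl ih =>
    have hc := hcws c List.mem_cons_self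
    have htl : ∀ c ∈ tl, IsTaggedCodeword c := fun c' h => hcws c' (List.mem_cons_of_mem _ h)
    rw [List.flatten_cons] at hq
    rcases lt_or_ge q c.length with hlt | hge
    · obtain rfl : q = 0 := by
        by_contra hq0
        exact hcw.not_prefix_drop_append hc hq0 hlt hq
      exact ⟨0, by simp, rfl, hcw.prefix_of_prefix_append hc.ne_nil
        (IsTaggedCodeword.head?_flatten htl) hq⟩
    · rw [List.drop_append, List.drop_eq_nil_of_le hge, List.nil_append] at hq
      obtain ⟨j, hj, hqj, hpre⟩ := ih htl (q - c.length) hq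
      refine ⟨j + 1, by simpa using hj, ?_, hpre⟩
      simp only [List.take_succ_cons, List.flatten_cons, List.length_append]
      omega
end

section
/- Call a natural number b tagged if b ≥ 128 and untagged if b < 128; a tagged codeword is a nonempty list of natural numbers whose first element is tagged and whose remaining elements are all untagged. Let W be a type and γ : W → List ℕ a map such that γ(w) is a tagged codeword for every w, and such that for all w ≠ w′, γ(w) is not a prefix of γ(w′). Then for every list t : List W and every w : W, the word w occurs in t (i.e., w is an element of t) if and only if γ(w) occurs as a contiguous sublist (infix) of the concatenation (t.map γ).join. -/
/-!
In a concatenation of tagged codewords the tagged bytes are exactly the first bytes of the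
codewords, so an occurrence of the tagged codeword `γ w` must start at a codeword boundary.
From that boundary on, `γ w` and the codeword `γ w'` found there are both prefixes of the same
list, hence one is a prefix of the other, and prefix-freeness forces `w = w'`.
-/

theorem exists_flatten_eq_of_append_cons_eq_flatten {L : List (List ℕ)}
    (hL : ∀ l ∈ L, IsTaggedCodeword l) {u r : List ℕ} {x : ℕ} (hx : 128 ≤ x)
    (h : u ++ x :: r = L.flatten) :
    ∃ L₁ L₂, L = L₁ ++ L₂ ∧ u = L₁.flatten ∧ x :: r = L₂.flatten := by
  induction L generalizing u with
  | nil => simp at h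
  | cons l L ih =>
    rw [List.flatten_cons, List.append_eq_append_iff] at h
    rcases h with ⟨_ | ⟨b, c⟩, hl, hxr⟩ | ⟨c, rfl, hc⟩
    · exact ⟨[l], L, rfl, by simpa using hl.symm, by simpa using hxr⟩
    · obtain ⟨rfl, -⟩ : x = b ∧ r = c ++ L.flatten := by simpa using hxr
      rcases u with _ | ⟨y, u⟩
      · exact ⟨[], l :: L, rfl, rfl, by simp [hl, hxr]⟩
      · obtain ⟨a, s, rfl, -, hs⟩ := hL l List.mem_cons_self
        obtain ⟨-, rfl⟩ := List.cons_eq_cons.mp hl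
        exact absurd (hs x (by simp)) (by omega)
    · obtain ⟨L₁, L₂, rfl, rfl, hL₂⟩ := ih (fun l hl' => hL l (.tail _ hl')) hc.symm
      exact ⟨l :: L₁, L₂, rfl, by simp, hL₂⟩

section PrefixFree

variable {W : Type*} {γ : W → List ℕ}

theorem exists_eq_cons_of_append_eq_flatten_map (hpre : ∀ w w', w ≠ w' → ¬ (γ w <+: γ w'))
    {w : W} (hw : γ w ≠ []) {t : List W} {v : List ℕ} (h : γ w ++ v = (t.map γ).flatten) :
    ∃ t', t = w :: t' := by
  rcases t with _ | ⟨w', t'⟩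
  · exact absurd (List.append_eq_nil_iff.mp h).1 hw
  · refine ⟨t', ?_⟩
    have hcomm : γ w <+: γ w' ∨ γ w' <+: γ w :=
      List.prefix_or_prefix_of_prefix ⟨v, h⟩ (List.prefix_append _ _)
    suffices w = w' by rw [this]
    by_contra hne
    exact hcomm.elim (hpre w w' hne) (hpre w' w (Ne.symm hne))

theorem mem_of_infix_flatten_map (hcode : ∀ w, IsTaggedCodeword (γ w))
    (hpre : ∀ w w', w ≠ w' → ¬ (γ w <+: γ w')) {t : List W} {w : W}
    (h : γ w <:+: (t.map γ).flatten) : w ∈ t := by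
  obtain ⟨u, v, huv⟩ := h
  obtain ⟨a, s, hw, ha, -⟩ := hcode w
  have hcodes : ∀ l ∈ t.map γ, IsTaggedCodeword l := by
    simpa using fun w _ => hcode w
  obtain ⟨L₁, L₂, hsplit, rfl, hL₂⟩ := exists_flatten_eq_of_append_cons_eq_flatten hcodes ha
    (r := s ++ v) (by simpa [hw] using huv)
  obtain ⟨t₁, t₂, rfl, rfl, rfl⟩ := List.map_eq_append_iff.mp hsplit
  obtain ⟨t', rfl⟩ := exists_eq_cons_of_append_eq_flatten_map hpre (w := w) (by simp [hw])
    (v := v) (by simpa [hw] using hL₂)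
  simp

end PrefixFree

/-- **Correctness of the digested text of the WFM-index.**
Let `γ` assign to every word `w` a tagged codeword `γ w`, in such a way that for distinct
words `w ≠ w'` the codeword `γ w` is not a prefix of `γ w'`.  Then for every list of words
`t` and every word `w`, the word `w` occurs in `t` iff `γ w` occurs as a contiguous sublist
(infix) of the concatenation `(t.map γ).flatten`. -/
theorem stmt11 {W : Type*} (γ : W → List ℕ)
    (hcode : ∀ w, IsTaggedCodeword (γ w))
    (hpre : ∀ w w', w ≠ w' → ¬ (γ w <+: γ w')) :
    ∀ (t : List W) (w : W), w ∈ t ↔ γ w <:+: (t.map γ).flatten :=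
  fun _ _ => ⟨fun hw => List.infix_of_mem_flatten (List.mem_map_of_mem hw),
    mem_of_infix_flatten_map hcode hpre⟩
end

section
/- Let α be a linearly ordered type, let L ≥ 1, and let u and v be lists of blocks, where each block is a list over α of length exactly L. Then (u.join) <_lex (v.join) if and only if u <_lex v, where lists of blocks are compared lexicographically using the order <_lex on individual blocks. -/
/-!
When `a` and `b` have the same length, `a ++ s` and `b ++ t` are compared lexicographically by
comparing `a` with `b` first and, only on a tie, `s` with `t`. Applied block by block this turns
the comparison of the concatenations into the blockwise comparison; the blocks must be nonempty
so that `[]` lies strictly below every nonempty list of blocks on both sides.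
-/

namespace List

variable {α : Type*} {r : α → α → Prop}

theorem lex_append_append_iff_of_length_eq :
    ∀ {a b : List α}, a.length = b.length → ∀ s t : List α,
      Lex r (a ++ s) (b ++ t) ↔ Lex r a b ∨ a = b ∧ Lex r s t
  | [], [], _, s, t => by simp [not_lex_nil]
  | x :: a, y :: b, h, s, t => by
    rw [cons_append, cons_append, cons_lex_cons_iff, cons_lex_cons_iff, cons.injEq,
      lex_append_append_iff_of_length_eq (Nat.succ_injective h)]
    tauto

theorem lex_flatten_iff_of_length_eq {L : ℕ} (hL : 0 < L) :
    ∀ {u v : List (List α)}, (∀ b ∈ u, b.length = L) → (∀ b ∈ v, b.length = L) →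
      (Lex r u.flatten v.flatten ↔ Lex (Lex r) u v)
  | [], [], _, _ => by simp [not_lex_nil]
  | _ :: _, [], _, _ => by simp [not_lex_nil]
  | [], b :: _, _, hv => by
    obtain ⟨x, xs, rfl⟩ := exists_cons_of_length_pos ((hv b mem_cons_self).symm ▸ hL)
    exact iff_of_true .nil .nil
  | a :: u, b :: v, hu, hv => by
    have hab : a.length = b.length := (hu a mem_cons_self).trans (hv b mem_cons_self).symm
    rw [flatten_cons, flatten_cons, lex_append_append_iff_of_length_eq hab, cons_lex_cons_iff,
      lex_flatten_iff_of_length_eq hL (fun c hc => hu c (mem_cons_of_mem a hc))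
        (fun c hc => hv c (mem_cons_of_mem b hc))]

end List

/-- **Blockwise lexicographic comparison.**
Let `L ≥ 1` and let `u` and `v` be lists of blocks, each block being a list over `α` of
length exactly `L`.  Then the concatenation `u.flatten` is lexicographically smaller than
`v.flatten` iff `u` is smaller than `v` in the lexicographic order on lists of blocks,
where blocks are compared by `<_lex`. -/
theorem stmt13 {α : Type*} [LinearOrder α] (L : ℕ) (hL : 1 ≤ L)
    (u v : List (List α))
    (hu : ∀ b ∈ u, b.length = L) (hv : ∀ b ∈ v, b.length = L) :
    List.Lex (· < ·) u.flatten v.flatten ↔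
      List.Lex (fun a b => List.Lex (· < ·) a b) u v :=
  List.lex_flatten_iff_of_length_eq hL hu hv
end

section
/- Let s₁ <_lex s₂ <_lex ⋯ <_lex s_K (K ≥ 1) be distinct bit strings (lists over Bool with false < true), pairwise non-prefix (no s_i is a prefix of s_j for i ≠ j), sorted in increasing lexicographic order. For 1 ≤ i < K let m_i = lcp(s_i, s_{i+1}) + 1 be the first mismatching position of s_i and s_{i+1} (so the m_i-th bit of s_i is 0 and the m_i-th bit of s_{i+1} is 1). Given a query bit string P, write P⟨ℓ⟩ for the ℓ-th bit of P if ℓ ≤ |P| and 0 otherwise, and run the following procedure: initialize x := 1 and i := 1; while i ≤ K−1, set ℓ := m_i; if P⟨ℓ⟩ = 1 then set x := i+1 and i := i+1; otherwise leave x unchanged and set i to the smallest index i′ with i < i′ ≤ K−1 and m_{i′} < ℓ, or terminate if no such index exists. Then the final value of x satisfies lcp(P, s_x) = max over 1 ≤ j ≤ K of lcp(P, s_j). -/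
/-- `lcpLen u v` is the length of the longest common prefix of the lists `u` and `v`. -/
def lcpLen {α : Type*} [DecidableEq α] : List α → List α → ℕ
  | a :: u, b :: v => if a = b then lcpLen u v + 1 else 0
  | _, _ => 0

/-- The loop of Ferguson's array-based Patricia-tree search.  State: `x` (current candidate,
`1`-based index) and `i` (current scan position).  While `i ≤ K - 1`: set `ℓ := m i`;
if the `ℓ`-th bit of the pattern (`Pbit ℓ`) is `1` then `x := i + 1` and `i := i + 1`;
otherwise `x` is unchanged and `i` jumps to the smallest `i'` with `i < i' ≤ K - 1` and
`m i' < ℓ`, terminating if no such index exists.  The `fuel` argument (any value `≥ K`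
suffices, since `i` strictly increases) makes the recursion structural. -/
def fergLoop (K : ℕ) (m : ℕ → ℕ) (Pbit : ℕ → Bool) : ℕ → ℕ → ℕ → ℕ
  | 0, x, _ => x
  | fuel + 1, x, i =>
    if i ≤ K - 1 then
      if Pbit (m i) then
        fergLoop K m Pbit fuel (i + 1) (i + 1)
      else
        match (List.range' (i + 1) (K - 1 - i)).find? (fun i' => m i' < m i) with
        | some i' => fergLoop K m Pbit fuel x i'
        | none => x
    else x

/-- Ferguson's search procedure: initialize `x := 1`, `i := 1` and run the loop. -/
def ferg (K : ℕ) (m : ℕ → ℕ) (Pbit : ℕ → Bool) : ℕ :=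
  fergLoop K m Pbit K 1 1

/-
Write `c t = lcpLen (s t) (s (t + 1))`, so that `m t = c t + 1`. The scan keeps the invariant
`FergInvariant`: `x` maximises `lcpLen P (s j)` over `j ≤ i`, and `c t > c i` for `x ≤ t < i`.
Hence `s x, …, s i` agree up to and including position `c i`, where `s i` has bit `0` and
`s (i + 1)` bit `1`. Everything follows from the ultrametric inequality
`min (lcpLen u v) (lcpLen v w) ≤ lcpLen u w`.
If `P` has bit `1` at position `c i`, then `lcpLen P (s x) ≤ c i ≤ lcpLen (s x) (s (i + 1))`, so
`s (i + 1)` is at least as good as `s x`.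
If `P` has bit `0` there, then `lcpLen P (s (i + 1)) ≤ c i`, while every skipped `s j` (`i < j`,
with `c t ≥ c i` for `i < t < j`) shares more than `c i` bits with `s (i + 1)`, equality being
excluded by sortedness. Hence `lcpLen P (s j) ≤ lcpLen P (s (i + 1)) ≤ lcpLen P (s i)`.
-/

section lcpLen

variable {α : Type*} [DecidableEq α]

@[simp]
theorem lcpLen_nil_left (v : List α) : lcpLen [] v = 0 := by
  cases v <;> rfl

@[simp]
theorem lcpLen_nil_right (u : List α) : lcpLen u [] = 0 := by
  cases u <;> rfl

@[simp]
theorem lcpLen_cons_cons (a b : α) (u v : List α) :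
    lcpLen (a :: u) (b :: v) = if a = b then lcpLen u v + 1 else 0 :=
  rfl

theorem lcpLen_comm (u v : List α) : lcpLen u v = lcpLen v u := by
  induction u generalizing v with
  | nil => simp
  | cons a u ih =>
    cases v with
    | nil => simp
    | cons b v => simp [ih, eq_comm]

theorem getElem?_eq_of_lt_lcpLen {u v : List α} {k : ℕ} (h : k < lcpLen u v) :
    u[k]? = v[k]? := by
  induction u generalizing v k with
  | nil => simp at h
  | cons a u ih =>
    cases v with
    | nil => simp at h
    | cons b v =>
      by_cases hab : a = b
      · subst hab
        cases k with
        | zero => rfl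
        | succ k => simpa using ih (by simpa using h)
      · simp [hab] at h

theorem lcpLen_le_of_getElem?_ne {u v : List α} {k : ℕ} (h : u[k]? ≠ v[k]?) :
    lcpLen u v ≤ k :=
  not_lt.mp (mt getElem?_eq_of_lt_lcpLen h)

theorem lcpLen_le_of_getD_ne {u v : List α} {k : ℕ} {a d : α} (hv : v[k]? = some a)
    (hu : u.getD k d ≠ a) : lcpLen u v ≤ k :=
  lcpLen_le_of_getElem?_ne fun h => hu (by rw [List.getD_eq_getElem?_getD, h, hv]; rfl)

theorem min_lcpLen_le_lcpLen (u v w : List α) : min (lcpLen u v) (lcpLen v w) ≤ lcpLen u w := by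
  induction u generalizing v w with
  | nil => simp
  | cons a u ih =>
    cases v with
    | nil => simp
    | cons b v =>
      cases w with
      | nil => simp
      | cons c w =>
        have := ih v w
        simp only [lcpLen_cons_cons]
        split_ifs <;> simp_all

theorem getElem?_lcpLen_of_lex {u v : List Bool} (h : List.Lex (· < ·) u v) (hp : ¬ u <+: v) :
    u[lcpLen u v]? = some false ∧ v[lcpLen u v]? = some true := by
  induction h with
  | nil => exact absurd List.nil_prefix hp
  | cons h ih => simpa using ih (by simpa using hp)
  | rel hab =>
    obtain ⟨rfl, rfl⟩ := Bool.lt_iff.mp hab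
    simp

end lcpLen

/-- The procedure's first mismatch position `m t` (1-based) is `adjLcpLen s t + 1`. -/
def adjLcpLen {α : Type*} [DecidableEq α] (s : ℕ → List α) (t : ℕ) : ℕ :=
  lcpLen (s t) (s (t + 1))

theorem le_lcpLen_of_le_adjLcpLen {α : Type*} [DecidableEq α] (s : ℕ → List α) {a b n : ℕ}
    (hab : a < b) (h : ∀ t, a ≤ t → t < b → n ≤ adjLcpLen s t) :
    n ≤ lcpLen (s a) (s b) := by
  induction b, hab using Nat.le_induction with
  | base => exact h a le_rfl (Nat.lt_succ_self a)
  | succ b hab ih =>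
    have hb : n ≤ adjLcpLen s b := h b (by omega) (Nat.lt_succ_self b)
    have := min_lcpLen_le_lcpLen (s a) (s b) (s (b + 1))
    have := ih fun t ht htb => h t ht (by omega)
    unfold adjLcpLen at hb
    omega

def LexSortedOn (K : ℕ) (s : ℕ → List Bool) : Prop :=
  ∀ i, 1 ≤ i → i < K → List.Lex (· < ·) (s i) (s (i + 1))

def NonPrefixOn (K : ℕ) (s : ℕ → List Bool) : Prop :=
  ∀ i j, 1 ≤ i → i ≤ K → 1 ≤ j → j ≤ K → i ≠ j → ¬ (s i <+: s j)

section SortedFamily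

variable {K : ℕ} {s : ℕ → List Bool}

theorem lex_of_lt (hsorted : LexSortedOn K s) {a b : ℕ} (ha : 1 ≤ a) (hab : a < b)
    (hb : b ≤ K) : List.Lex (· < ·) (s a) (s b) := by
  induction b, hab using Nat.le_induction with
  | base => exact hsorted a ha hb
  | succ b hab ih =>
    exact List.lex_trans lt_trans (ih (by omega)) (hsorted b (by omega) (by omega))

theorem getElem?_lcpLen_of_lt (hnp : NonPrefixOn K s) (hsorted : LexSortedOn K s) {a b : ℕ}
    (ha : 1 ≤ a) (hab : a < b) (hb : b ≤ K) :
    (s a)[lcpLen (s a) (s b)]? = some false ∧ (s b)[lcpLen (s a) (s b)]? = some true :=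
  getElem?_lcpLen_of_lex (lex_of_lt hsorted ha hab hb) (hnp a b ha (by omega) (by omega) hb hab.ne)

theorem lcpLen_le_lcpLen_succ_of_getD_eq_true (hnp : NonPrefixOn K s) (hsorted : LexSortedOn K s)
    {P : List Bool} {x i : ℕ} (hx : 1 ≤ x) (hxi : x ≤ i) (hi : i < K)
    (hgap : ∀ t, x ≤ t → t < i → adjLcpLen s i < adjLcpLen s t)
    (hbit : P.getD (adjLcpLen s i) false = true) :
    lcpLen P (s x) ≤ lcpLen P (s (i + 1)) := by
  have hfalse : (s i)[adjLcpLen s i]? = some false :=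
    (getElem?_lcpLen_of_lt hnp hsorted (by omega) i.lt_add_one (by omega)).1
  have hxi1 : adjLcpLen s i ≤ lcpLen (s x) (s (i + 1)) :=
    le_lcpLen_of_le_adjLcpLen s (by omega) fun t hxt hti => by
      rcases (Nat.lt_succ_iff.mp hti).lt_or_eq with h | rfl
      · exact (hgap t hxt h).le
      · exact le_rfl
  have hsx : (s x)[adjLcpLen s i]? = some false := by
    rcases hxi.lt_or_eq with h | rfl
    · rw [getElem?_eq_of_lt_lcpLen (v := s i)]
      · exact hfalse
      · exact le_lcpLen_of_le_adjLcpLen s h hgap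
    · exact hfalse
  have hPx : lcpLen P (s x) ≤ adjLcpLen s i :=
    lcpLen_le_of_getD_ne (d := false) hsx (hbit.trans_ne (by decide))
  have := min_lcpLen_le_lcpLen P (s x) (s (i + 1))
  omega

theorem lcpLen_le_lcpLen_of_getD_eq_false (hnp : NonPrefixOn K s) (hsorted : LexSortedOn K s)
    {P : List Bool} {i j : ℕ} (hi : 1 ≤ i) (hij : i < j) (hj : j ≤ K)
    (hbit : P.getD (adjLcpLen s i) false = false)
    (hgap : ∀ t, i < t → t < j → adjLcpLen s i ≤ adjLcpLen s t) :
    lcpLen P (s j) ≤ lcpLen P (s i) := by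
  have htrue : (s (i + 1))[adjLcpLen s i]? = some true :=
    (getElem?_lcpLen_of_lt hnp hsorted hi i.lt_add_one (by omega)).2
  have hP1 : lcpLen P (s (i + 1)) ≤ adjLcpLen s i :=
    lcpLen_le_of_getD_ne (d := false) htrue (hbit.trans_ne (by decide))
  have h1i : lcpLen P (s (i + 1)) ≤ lcpLen P (s i) := by
    have := min_lcpLen_le_lcpLen P (s (i + 1)) (s i)
    rw [lcpLen_comm (s (i + 1))] at this
    unfold adjLcpLen at hP1
    omega
  rcases (Nat.succ_le_of_lt hij).lt_or_eq with hij | rfl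
  · suffices hlt : adjLcpLen s i < lcpLen (s (i + 1)) (s j) by
      have := min_lcpLen_le_lcpLen P (s j) (s (i + 1))
      rw [lcpLen_comm (s j)] at this
      omega
    have hle : adjLcpLen s i ≤ lcpLen (s (i + 1)) (s j) :=
      le_lcpLen_of_le_adjLcpLen s hij hgap
    refine hle.lt_of_ne fun heq => ?_
    -- else `s (i + 1)` would carry bit `0` at `adjLcpLen s i`, its first mismatch with `s j`
    have := (getElem?_lcpLen_of_lt hnp hsorted (by omega) hij hj).1
    rw [← heq, htrue] at this
    simp at this
  · exact h1i

structure FergInvariant (K : ℕ) (s : ℕ → List Bool) (P : List Bool) (x i : ℕ) : Prop where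
  one_le : 1 ≤ x
  le_scan : x ≤ i
  le_bound : x ≤ K
  lcpLen_le : ∀ j, 1 ≤ j → j ≤ i → j ≤ K → lcpLen P (s j) ≤ lcpLen P (s x)
  adjLcpLen_lt : ∀ t, x ≤ t → t < i → adjLcpLen s i < adjLcpLen s t

def IsLcpMaximizer (K : ℕ) (s : ℕ → List Bool) (P : List Bool) (x : ℕ) : Prop :=
  x ∈ Finset.Icc 1 K ∧ ∀ j ∈ Finset.Icc 1 K, lcpLen P (s j) ≤ lcpLen P (s x)

namespace FergInvariant

variable {P : List Bool} {x i : ℕ}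

theorem start (hK : 1 ≤ K) : FergInvariant K s P 1 1 where
  one_le := le_rfl
  le_scan := le_rfl
  le_bound := hK
  lcpLen_le j hj hj1 _ := by rw [le_antisymm hj1 hj]
  adjLcpLen_lt t h1t ht1 := absurd ht1 (not_lt.mpr h1t)

theorem isLcpMaximizer (h : FergInvariant K s P x i) (hi : K ≤ i) : IsLcpMaximizer K s P x :=
  ⟨Finset.mem_Icc.mpr ⟨h.one_le, h.le_bound⟩, fun j hj => by
    obtain ⟨hj1, hjK⟩ := Finset.mem_Icc.mp hj
    exact h.lcpLen_le j hj1 (hjK.trans hi) hjK⟩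

theorem advance (hnp : NonPrefixOn K s) (hsorted : LexSortedOn K s) (h : FergInvariant K s P x i)
    (hi : i < K) (hbit : P.getD (adjLcpLen s i) false = true) :
    FergInvariant K s P (i + 1) (i + 1) where
  one_le := by omega
  le_scan := le_rfl
  le_bound := hi
  lcpLen_le j hj hji hjK := by
    rcases (Nat.le_succ_iff.mp hji) with hji | rfl
    · exact (h.lcpLen_le j hj hji hjK).trans <| lcpLen_le_lcpLen_succ_of_getD_eq_true hnp hsorted
        h.one_le h.le_scan hi h.adjLcpLen_lt hbit
    · exact le_rfl
  adjLcpLen_lt t ht hti := absurd hti (not_lt.mpr ht)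

theorem lcpLen_le_of_getD_eq_false (hnp : NonPrefixOn K s) (hsorted : LexSortedOn K s)
    (h : FergInvariant K s P x i) (hi : i < K) (hbit : P.getD (adjLcpLen s i) false = false)
    {j : ℕ} (hij : i < j) (hj : j ≤ K)
    (hgap : ∀ t, i < t → t < j → adjLcpLen s i ≤ adjLcpLen s t) :
    lcpLen P (s j) ≤ lcpLen P (s x) :=
  (lcpLen_le_lcpLen_of_getD_eq_false hnp hsorted (h.one_le.trans h.le_scan) hij hj hbit hgap).trans
    (h.lcpLen_le i (h.one_le.trans h.le_scan) le_rfl hi.le)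

theorem jump (hnp : NonPrefixOn K s) (hsorted : LexSortedOn K s) (h : FergInvariant K s P x i)
    (hi : i < K) (hbit : P.getD (adjLcpLen s i) false = false) {i' : ℕ} (hii' : i < i')
    (hlt : adjLcpLen s i' < adjLcpLen s i)
    (hgap : ∀ t, i < t → t < i' → adjLcpLen s i ≤ adjLcpLen s t) :
    FergInvariant K s P x i' where
  one_le := h.one_le
  le_scan := h.le_scan.trans hii'.le
  le_bound := h.le_bound
  lcpLen_le j hj hji' hjK := by
    rcases le_or_gt j i with hji | hij
    · exact h.lcpLen_le j hj hji hjK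
    · exact h.lcpLen_le_of_getD_eq_false hnp hsorted hi hbit hij hjK
        fun t hit htj => hgap t hit (htj.trans_le hji')
  adjLcpLen_lt t hxt hti' := by
    rcases lt_trichotomy t i with hti | rfl | hit
    · exact hlt.trans (h.adjLcpLen_lt t hxt hti)
    · exact hlt
    · exact hlt.trans_le (hgap t hit hti')

theorem isLcpMaximizer_of_getD_eq_false (hnp : NonPrefixOn K s) (hsorted : LexSortedOn K s)
    (h : FergInvariant K s P x i) (hi : i < K) (hbit : P.getD (adjLcpLen s i) false = false)
    (hgap : ∀ t, i < t → t < K → adjLcpLen s i ≤ adjLcpLen s t) : IsLcpMaximizer K s P x :=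
  ⟨Finset.mem_Icc.mpr ⟨h.one_le, h.le_bound⟩, fun j hj => by
    obtain ⟨hj1, hjK⟩ := Finset.mem_Icc.mp hj
    rcases le_or_gt j i with hji | hij
    · exact h.lcpLen_le j hj1 hji hjK
    · exact h.lcpLen_le_of_getD_eq_false hnp hsorted hi hbit hij hjK
        fun t hit htj => hgap t hit (htj.trans_le hjK)⟩

end FergInvariant

theorem fergLoop_isLcpMaximizer (hnp : NonPrefixOn K s) (hsorted : LexSortedOn K s)
    {P : List Bool} {fuel x i : ℕ} (h : FergInvariant K s P x i)
    (hfuel : K ≤ fuel + i) :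
    IsLcpMaximizer K s P
      (fergLoop K (fun t => adjLcpLen s t + 1) (fun ℓ => P.getD (ℓ - 1) false) fuel x i) := by
  induction fuel generalizing x i with
  | zero => exact h.isLcpMaximizer (by omega)
  | succ fuel ih =>
    have hi1 : 1 ≤ i := h.one_le.trans h.le_scan
    rw [fergLoop]
    split_ifs with hi hbit
    · simp only [Nat.add_sub_cancel] at hbit
      exact ih (h.advance hnp hsorted (by omega) hbit) (by omega)
    · simp only [Nat.add_sub_cancel, Bool.not_eq_true] at hbit
      split
      next i' hfind =>
        simp only [List.find?_range'_eq_some, List.mem_range'_1, decide_eq_true_eq,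
          add_lt_add_iff_right, Bool.not_eq_true', decide_eq_false_iff_not, not_lt] at hfind
        obtain ⟨hlt, ⟨hii', hi'K⟩, hgap⟩ := hfind
        exact ih (h.jump hnp hsorted (by omega) hbit hii' hlt fun t hit hti' => hgap t hit hti')
          (by omega)
      next hfind =>
        simp only [List.find?_range'_eq_none, add_lt_add_iff_right, Bool.not_eq_true',
          decide_eq_false_iff_not, not_lt] at hfind
        exact h.isLcpMaximizer_of_getD_eq_false hnp hsorted (by omega) hbit
          fun t hit htK => hfind t hit (by omega)
    · exact h.isLcpMaximizer (by omega)

end SortedFamily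

/-- **Correctness of the first phase of Ferguson's Patricia-tree search.**
Let `s 1 <_lex s 2 <_lex ⋯ <_lex s K` (`K ≥ 1`) be bit strings (lists over `Bool`, with
`false < true`), pairwise non-prefix, sorted in increasing lexicographic order, and for
`1 ≤ i < K` let `m i = lcpLen (s i) (s (i+1)) + 1` be the first mismatching position of
`s i` and `s (i+1)`.  For a query bit string `P`, let `P⟨ℓ⟩ = P.getD (ℓ - 1) false` be its
`ℓ`-th bit (`0` when `ℓ > P.length`).  Then the index `x` returned by the procedure
satisfies `lcpLen P (s x) = max_{1 ≤ j ≤ K} lcpLen P (s j)`. -/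
theorem stmt14 (K : ℕ) (hK : 1 ≤ K) (s : ℕ → List Bool)
    (hnp : ∀ i j, 1 ≤ i → i ≤ K → 1 ≤ j → j ≤ K → i ≠ j → ¬ (s i <+: s j))
    (hsorted : ∀ i, 1 ≤ i → i < K → List.Lex (· < ·) (s i) (s (i + 1)))
    (P : List Bool) :
    lcpLen P (s (ferg K (fun i => lcpLen (s i) (s (i + 1)) + 1)
        (fun ℓ => P.getD (ℓ - 1) false))) =
      (Finset.Icc 1 K).sup' (Finset.nonempty_Icc.mpr hK)
        (fun j => lcpLen P (s j)) := by
  obtain ⟨hmem, hmax⟩ : IsLcpMaximizer K s P (ferg K (fun i => adjLcpLen s i + 1)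
      (fun ℓ => P.getD (ℓ - 1) false)) :=
    fergLoop_isLcpMaximizer hnp hsorted (FergInvariant.start hK) (by omega)
  exact le_antisymm (Finset.le_sup' (fun j => lcpLen P (s j)) hmem) (Finset.sup'_le _ _ hmax)
end

section
/- Let T be a list of length n over a linearly ordered type α, and let # be an element of α strictly smaller than every character of T; set S = T ++ [#]. Then for all indices 0 ≤ i < j ≤ n, rot i S <_lex rot j S if and only if S.drop i <_lex S.drop j. Consequently, the lexicographic order of the n+1 rotations of S coincides with the lexicographic order of the corresponding suffixes of S. -/
namespace List

variable {α : Type*}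

theorem lex_append_append_iff_of_not_prefix (r : α → α → Prop) {u v : List α} (a b : List α)
    (huv : ¬ u <+: v) (hvu : ¬ v <+: u) : Lex r (u ++ a) (v ++ b) ↔ Lex r u v := by
  induction u generalizing v with
  | nil => exact absurd nil_prefix huv
  | cons x u ih =>
    cases v with
    | nil => exact absurd nil_prefix hvu
    | cons y v =>
      simp only [cons_append, cons_lex_cons_iff]
      refine or_congr_right (and_congr_right fun hxy => ih ?_ ?_)
      · exact fun h => huv (cons_prefix_cons.2 ⟨hxy, h⟩)
      · exact fun h => hvu (cons_prefix_cons.2 ⟨hxy.symm, h⟩)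

theorem not_prefix_drop_of_lt {S : List α} {i j : ℕ} (hij : i < j) (hi : i < S.length) :
    ¬ S.drop i <+: S.drop j := fun h => by
  have := h.length_le
  simp only [length_drop] at this
  omega

/-- A later suffix of `T ++ [x]` ends with the only occurrence of `x`, which would have to
reappear strictly inside `T` if it were a prefix of an earlier suffix. -/
theorem not_prefix_drop_concat_of_not_mem {T : List α} {x : α} (hx : x ∉ T) {i j : ℕ}
    (hij : i < j) (hj : j ≤ T.length) : ¬ (T ++ [x]).drop j <+: (T ++ [x]).drop i := by
  rw [drop_append_of_le_length hj, drop_append_of_le_length (by omega), prefix_concat_iff]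
  rintro (heq | hpre)
  · have := congrArg length heq
    simp only [length_append, length_drop] at this
    omega
  · exact hx (mem_of_mem_drop (hpre.subset (mem_append_right _ (mem_singleton_self x))))

end List

/-- **Rotations vs. suffixes with a minimal sentinel.**
Let `T` be a list of length `n` and let `hash` be strictly smaller than every character of
`T`; set `S = T ++ [hash]`.  Then for all `0 ≤ i < j ≤ n`,
`rot i S <_lex rot j S` iff `S.drop i <_lex S.drop j`: the lexicographic order of the
rotations of `S` coincides with that of the corresponding suffixes of `S`. -/
theorem stmt15 {α : Type*} [LinearOrder α] (T : List α) (hash : α)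
    (hhash : ∀ c ∈ T, hash < c)
    (i j : ℕ) (hij : i < j) (hj : j ≤ T.length) :
    (List.Lex (· < ·) (rot i (T ++ [hash])) (rot j (T ++ [hash])) ↔
      List.Lex (· < ·) ((T ++ [hash]).drop i) ((T ++ [hash]).drop j)) := by
  have hnotMem : hash ∉ T := fun h => lt_irrefl hash (hhash hash h)
  exact List.lex_append_append_iff_of_not_prefix _ _ _
    (List.not_prefix_drop_of_lt hij
      (by simp only [List.length_append, List.length_singleton]; omega))
    (List.not_prefix_drop_concat_of_not_mem hnotMem hij hj)
end

section
/- For a natural number x ≥ 1, define enc(x) : List ℕ as follows: write x in base 128 as digits d_k, d_{k−1}, …, d_0 with most significant digit d_k ≥ 1 first, and set enc(x) = [d_k + 128, d_{k−1}, …, d_0]. Then the map from List {x : ℕ // x ≥ 1} to List ℕ sending a list l of positive integers to (l.map enc).join is injective; i.e., the continuation-bit code is uniquely decodable on streams. -/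
/-- The continuation-bit code of a positive integer `x`: write `x` in base 128 as digits
`d_k, d_{k-1}, …, d_0` (most significant digit `d_k ≥ 1` first) and output
`[d_k + 128, d_{k-1}, …, d_0]`, i.e. the most significant byte is tagged by adding `128`.
(`Nat.digits 128 x` lists the base-128 digits least significant first.) -/
def encCB (x : ℕ) : List ℕ :=
  match (Nat.digits 128 x).reverse with
  | [] => []
  | d :: ds => (d + 128) :: ds

/-!
A codeword consists of one tagged symbol followed by untagged ones, so in a stream of
codewords every tagged symbol starts a codeword. Hence the first codeword of a stream is its
head followed by the maximal untagged run after it, and peeling codewords off one at a time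
recovers the list.
-/

namespace List

variable {α β : Type*}

/-- Symbols `a` with `p a` are the untagged ones. -/
def IsTaggedWord (p : α → Bool) (w : List α) : Prop :=
  ∃ c cs, w = c :: cs ∧ p c = false ∧ ∀ e ∈ cs, p e

theorem takeWhile_append_of_head_neg {p : α → Bool} {cs r : List α}
    (hcs : ∀ e ∈ cs, p e) (hr : ∀ a ∈ r.head?, p a = false) :
    (cs ++ r).takeWhile p = cs ∧ (cs ++ r).dropWhile p = r := by
  rw [takeWhile_append_of_pos hcs, dropWhile_append_of_pos hcs]
  cases r with
  | nil => simp
  | cons a r => simp [hr a rfl]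

theorem head?_flatten_map_neg {p : α → Bool} {f : β → List α}
    (hf : ∀ b, IsTaggedWord p (f b)) (l : List β) :
    ∀ a ∈ (l.map f).flatten.head?, p a = false := by
  cases l with
  | nil => simp
  | cons b l =>
    obtain ⟨c, cs, hb, hc, -⟩ := hf b
    simpa [hb] using hc

theorem flatten_map_injective_of_isTaggedWord {p : α → Bool} {f : β → List α}
    (hinj : f.Injective) (hf : ∀ b, IsTaggedWord p (f b)) :
    Function.Injective fun l : List β => (l.map f).flatten := by
  intro l m h
  induction l generalizing m with
  | nil =>
    cases m with
    | nil => rfl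
    | cons b m =>
      obtain ⟨c, cs, hb, -⟩ := hf b
      simp [hb] at h
  | cons a l ih =>
    obtain ⟨c, cs, ha, -, hcs⟩ := hf a
    cases m with
    | nil => simp [ha] at h
    | cons b m =>
      obtain ⟨c', cs', hb, -, hcs'⟩ := hf b
      simp only [map_cons, flatten_cons, ha, hb, cons_append, cons.injEq] at h
      obtain ⟨rfl, h⟩ := h
      obtain ⟨htake, hdrop⟩ := takeWhile_append_of_head_neg hcs (head?_flatten_map_neg hf l)
      obtain ⟨htake', hdrop'⟩ := takeWhile_append_of_head_neg hcs' (head?_flatten_map_neg hf m)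
      have hab : a = b := hinj (by rw [ha, hb, ← htake, ← htake', h])
      have hlm : (l.map f).flatten = (m.map f).flatten := by rw [← hdrop, ← hdrop', h]
      rw [hab, ih hlm]

end List

theorem encCB_eq_cons {x : ℕ} (hx : x ≠ 0) :
    ∃ d ds, (Nat.digits 128 x).reverse = d :: ds ∧ encCB x = (d + 128) :: ds := by
  obtain ⟨d, ds, hds⟩ := List.exists_cons_of_ne_nil
    (List.reverse_ne_nil_iff.mpr (Nat.digits_ne_nil_iff_ne_zero.mpr hx))
  exact ⟨d, ds, hds, by rw [encCB, hds]⟩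

theorem encCB_isTaggedWord {x : ℕ} (hx : x ≠ 0) :
    List.IsTaggedWord (fun e => decide (e < 128)) (encCB x) := by
  obtain ⟨d, ds, hrev, henc⟩ := encCB_eq_cons hx
  refine ⟨d + 128, ds, henc, by simp, fun e he => ?_⟩
  have he' : e ∈ Nat.digits 128 x := by
    rw [← List.mem_reverse, hrev]
    exact List.mem_cons_of_mem d he
  simpa using Nat.digits_lt_base (by norm_num) he'

theorem encCB_injOn : Set.InjOn encCB {x | x ≠ 0} := by
  intro x hx y hy h
  obtain ⟨d, ds, hrx, hex⟩ := encCB_eq_cons hx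
  obtain ⟨e, es, hry, hey⟩ := encCB_eq_cons hy
  rw [hex, hey, List.cons.injEq, Nat.add_right_cancel_iff] at h
  rw [← Nat.digits_inj_iff, ← List.reverse_inj, hrx, hry, h.1, h.2]

/-- **Unique decodability of the continuation-bit code on streams.**
The map sending a list `l` of positive integers to the concatenation of the
continuation-bit codes of its elements is injective. -/
theorem stmt17 :
    Function.Injective
      (fun l : List {x : ℕ // 1 ≤ x} => (l.map (fun x => encCB x.val)).flatten) :=
  List.flatten_map_injective_of_isTaggedWord
    (fun x y h => Subtype.ext (encCB_injOn (Nat.one_le_iff_ne_zero.mp x.2)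
      (Nat.one_le_iff_ne_zero.mp y.2) h))
    (fun x => encCB_isTaggedWord (Nat.one_le_iff_ne_zero.mp x.2))
end
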